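/- Consider a weakly reversible generalized chemical reaction network with stoichiometric subspace S = range(Y I_E) and kinetic-order subspace S̃ = range(Ỹ I_E). Suppose there exist nonzero vectors u ∈ S̃^⊥ and v ∈ S with sign(u_i) = sign(v_i) for all i = 1,…,n. Then there exist edge labels k ∈ ℝ^E_+ and a complex-balanced equilibrium x* ∈ Z_k such that J(x*) v = 0; in particular, J(x*) is not stable on S. -/

import Mathlib

open Matrix Polynomial Filter Topology

noncomputable section

/-- `D ∈ 𝒟₊`: a diagonal matrix with positive diagonal entries. -/
def IsPosDiag {n : ℕ} (D : Matrix (Fin n) (Fin n) ℝ) : Prop :=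
  ∃ d : Fin n → ℝ, (∀ i, 0 < d i) ∧ D = Matrix.diagonal d

/-- A real square matrix is stable if every root in `ℂ` of its characteristic
polynomial has negative real part. -/
def IsStableMat {n : ℕ} (A : Matrix (Fin n) (Fin n) ℝ) : Prop :=
  ∀ z : ℂ, (A.charpoly.map (algebraMap ℝ ℂ)).IsRoot z → z.re < 0

/-- A real square matrix is semistable if every root in `ℂ` of its characteristic
polynomial has non-positive real part. -/
def IsSemistableMat {n : ℕ} (A : Matrix (Fin n) (Fin n) ℝ) : Prop :=
  ∀ z : ℂ, (A.charpoly.map (algebraMap ℝ ℂ)).IsRoot z → z.re ≤ 0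

/-- The restriction `A|_S : S → S` of a matrix whose range is contained in `S`. -/
def restrictedMap {n : ℕ} (A : Matrix (Fin n) (Fin n) ℝ) (S : Submodule ℝ (Fin n → ℝ))
    (h : ∀ v, A.mulVec v ∈ S) : S →ₗ[ℝ] S :=
  A.mulVecLin.restrict (p := S) (q := S) (fun x _ => by simpa using h x)

/-- `A` is stable on `S`: `range A ⊆ S` and every eigenvalue over `ℂ` (root of the
characteristic polynomial) of `A|_S : S → S` has negative real part. -/
def IsStableOn {n : ℕ} (A : Matrix (Fin n) (Fin n) ℝ) (S : Submodule ℝ (Fin n → ℝ)) : Prop :=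
  ∃ h : ∀ v, A.mulVec v ∈ S,
    ∀ z : ℂ, (((restrictedMap A S h).charpoly).map (algebraMap ℝ ℂ)).IsRoot z → z.re < 0

/-- `A` is semistable on `S`: `range A ⊆ S` and every eigenvalue over `ℂ` of
`A|_S : S → S` has non-positive real part. -/
def IsSemistableOn {n : ℕ} (A : Matrix (Fin n) (Fin n) ℝ) (S : Submodule ℝ (Fin n → ℝ)) : Prop :=
  ∃ h : ∀ v, A.mulVec v ∈ S,
    ∀ z : ℂ, (((restrictedMap A S h).charpoly).map (algebraMap ℝ ℂ)).IsRoot z → z.re ≤ 0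

/-- `M < 0` on `S`. -/
def NegDefOn {n : ℕ} (M : Matrix (Fin n) (Fin n) ℝ) (S : Submodule ℝ (Fin n → ℝ)) : Prop :=
  ∀ x ∈ S, x ≠ 0 → x ⬝ᵥ M.mulVec x < 0

/-- `M ≤ 0` on `S`. -/
def NegSemidefOn {n : ℕ} (M : Matrix (Fin n) (Fin n) ℝ) (S : Submodule ℝ (Fin n → ℝ)) : Prop :=
  ∀ x ∈ S, x ⬝ᵥ M.mulVec x ≤ 0

/-- `M > 0` on `S`. -/
def PosDefOn {n : ℕ} (M : Matrix (Fin n) (Fin n) ℝ) (S : Submodule ℝ (Fin n → ℝ)) : Prop :=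
  ∀ x ∈ S, x ≠ 0 → 0 < x ⬝ᵥ M.mulVec x

/-- The Laplacian matrix `A_k` of the labeled digraph `(V,E)` with edge labels `k`:
`(A_k)_{i',i} = k_{i→i'}` if `(i→i') ∈ E`, `(A_k)_{i,i} = -∑_{(i→i')∈E} k_{i→i'}`,
and `0` otherwise (the graph has no self-loops). -/
def laplacian {m : ℕ} (E : Finset (Fin m × Fin m)) (k : Fin m × Fin m → ℝ) :
    Matrix (Fin m) (Fin m) ℝ :=
  fun i' i => (if (i, i') ∈ E then k (i, i') else 0)
    - (if i' = i then ∑ e ∈ E.filter (fun e => e.1 = i), k e else 0)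

/-- The incidence matrix `I_E ∈ ℝ^{V×E}`, with column `e_{i'} - e_i` for each edge `(i→i')`. -/
def incidence {m : ℕ} (E : Finset (Fin m × Fin m)) :
    Matrix (Fin m) {e : Fin m × Fin m // e ∈ E} ℝ :=
  fun i e => (if (e : Fin m × Fin m).2 = i then (1 : ℝ) else 0)
    - (if (e : Fin m × Fin m).1 = i then 1 else 0)

/-- `x^Ỹ ∈ ℝ^V`, defined by `(x^Ỹ)_j = ∏_i x_i ^ (Ỹ)_{ij}` (real exponents). -/
def powVec {n m : ℕ} (x : Fin n → ℝ) (Yt : Matrix (Fin n) (Fin m) ℝ) : Fin m → ℝ :=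
  fun j => ∏ i, (x i) ^ (Yt i j)

/-- The digraph `(V,E)` is weakly reversible: every connected component is strongly
connected, i.e. whenever `a` and `b` are connected by an undirected path, there is a
directed path from `a` to `b`. -/
def WeaklyReversible {m : ℕ} (E : Finset (Fin m × Fin m)) : Prop :=
  ∀ a b : Fin m,
    Relation.ReflTransGen (fun u v => (u, v) ∈ E ∨ (v, u) ∈ E) a b →
    Relation.ReflTransGen (fun u v => (u, v) ∈ E) a b

/-- The stoichiometric subspace `S = range (Y I_E)`. -/
def stoichSubspace {n m : ℕ} (Y : Matrix (Fin n) (Fin m) ℝ) (E : Finset (Fin m × Fin m)) :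
    Submodule ℝ (Fin n → ℝ) :=
  LinearMap.range (Y * incidence E).mulVecLin

/-- The Jacobian matrix `J(x) = Y A_k diag(x^Ỹ) Ỹᵀ diag(x⁻¹)` of `x ↦ Y A_k x^Ỹ`. -/
def jacobianMat {n m : ℕ} (E : Finset (Fin m × Fin m)) (k : Fin m × Fin m → ℝ)
    (Y Yt : Matrix (Fin n) (Fin m) ℝ) (x : Fin n → ℝ) : Matrix (Fin n) (Fin n) ℝ :=
  Y * laplacian E k * Matrix.diagonal (powVec x Yt) * Ytᵀ * Matrix.diagonal (fun i => (x i)⁻¹)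

/-- `C` is (the edge set of) a cycle: `{i_1→i_2, …, i_{r-1}→i_r, i_r→i_1}` with
pairwise distinct vertices `i_1, …, i_r` (and `r ≥ 2`). -/
def IsCycleEdges {m : ℕ} (C : Finset (Fin m × Fin m)) : Prop :=
  ∃ (r : ℕ) (f : Fin (r + 2) → Fin m), Function.Injective f ∧
    C = Finset.image (fun j => (f j, f (j + 1))) Finset.univ

/-- The edge set of the directed `m`-cycle `1 → 2 → ⋯ → m → 1`. -/
def cycleEdges (m : ℕ) [NeZero m] : Finset (Fin m × Fin m) :=
  Finset.image (fun i : Fin m => (i, i + 1)) Finset.univ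

end

/-!
Weak reversibility gives a circulation `w` on `E` that is positive on every edge, and with
`k e = w e / c (source e)` every positive `c` satisfies `A_k c = 0`. Choose `x > 0` with
`v = x * u` (possible since `u` and `v` are sign-compatible) and `c = x^Ỹ`. Then
`J(x) v = Y A_k (c * Ỹᵀ u)`, and `u ∈ S̃^⊥` says exactly that `Ỹᵀ u` is constant along the
edges, so `A_k (c * Ỹᵀ u) = (A_k c) * Ỹᵀ u = 0`. Thus `v` is a kernel vector of `J(x)|_S`, and
`0` is an eigenvalue there.
-/

section Circulation

variable {m : ℕ} (E : Finset (Fin m × Fin m))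

def IsCirculation {M : Type*} [AddCommMonoid M] (w : Fin m × Fin m → M) : Prop :=
  ∀ j, ∑ e ∈ E with e.2 = j, w e = ∑ e ∈ E with e.1 = j, w e

variable {E}

lemma IsCirculation.map {M N : Type*} [AddCommMonoid M] [AddCommMonoid N] {w : Fin m × Fin m → M}
    (hw : IsCirculation E w) (f : M →+ N) : IsCirculation E (f ∘ w) := fun j => by
  simp only [Function.comp_apply, ← map_sum, hw j]

lemma isCirculation_sum {M ι : Type*} [AddCommMonoid M] (s : Finset ι)
    {w : ι → Fin m × Fin m → M} (hw : ∀ i ∈ s, IsCirculation E (w i)) :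
    IsCirculation E (∑ i ∈ s, w i) := fun j => by
  simp only [Finset.sum_apply]
  rw [Finset.sum_comm, Finset.sum_congr rfl fun i hi => hw i hi j, Finset.sum_comm]

/-- A directed path from `a` to `b` carries a unit flow from `a` to `b`. -/
lemma exists_flow_of_reflTransGen {a b : Fin m}
    (h : Relation.ReflTransGen (fun u v => (u, v) ∈ E) a b) :
    ∃ w : Fin m × Fin m → ℕ, ∀ j,
      (∑ e ∈ E with e.2 = j, w e) + (if a = j then 1 else 0)
        = (∑ e ∈ E with e.1 = j, w e) + (if b = j then 1 else 0) := by
  induction h with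
  | refl => exact ⟨0, fun j => by simp⟩
  | @tail b c _ hbc ih =>
    obtain ⟨w, hw⟩ := ih
    refine ⟨w + fun e => if e = (b, c) then 1 else 0, fun j => ?_⟩
    simp only [Pi.add_apply, Finset.sum_add_distrib, Finset.sum_ite_eq', Finset.mem_filter, hbc,
      true_and]
    have hj := hw j
    split_ifs at hj ⊢ <;> omega

lemma exists_isCirculation_pos_of_mem (hwr : WeaklyReversible E) {e : Fin m × Fin m}
    (he : e ∈ E) : ∃ w : Fin m × Fin m → ℕ, IsCirculation E w ∧ 0 < w e := by
  obtain ⟨w, hw⟩ := exists_flow_of_reflTransGen (hwr e.2 e.1 (.single (Or.inr he)))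
  refine ⟨w + fun e' => if e' = e then 1 else 0, fun j => ?_, by simp⟩
  simp only [Pi.add_apply, Finset.sum_add_distrib, Finset.sum_ite_eq', Finset.mem_filter, he,
    true_and]
  exact hw j

lemma exists_isCirculation_pos (hwr : WeaklyReversible E) :
    ∃ w : Fin m × Fin m → ℕ, IsCirculation E w ∧ ∀ e ∈ E, 0 < w e := by
  choose w hw hpos using fun e : E => exists_isCirculation_pos_of_mem hwr e.2
  refine ⟨∑ e : E, w e, isCirculation_sum _ fun e _ => hw e, fun e he => ?_⟩
  rw [Finset.sum_apply]
  exact (hpos ⟨e, he⟩).trans_le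
    (Finset.single_le_sum (f := fun e' : E => w e' e) (by simp) (Finset.mem_univ _))

end Circulation

section Laplacian

variable {m : ℕ} {E : Finset (Fin m × Fin m)} {k : Fin m × Fin m → ℝ}

lemma laplacian_mulVec_apply (y : Fin m → ℝ) (j : Fin m) :
    (laplacian E k *ᵥ y) j
      = ∑ e ∈ E with e.2 = j, k e * y e.1 - ∑ e ∈ E with e.1 = j, k e * y e.1 := by
  have hin : ∑ e ∈ E with e.2 = j, k e * y e.1
      = ∑ i, (if (i, j) ∈ E then k (i, j) else 0) * y i := by
    simp only [ite_mul, zero_mul]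
    rw [← Finset.sum_filter]
    refine Finset.sum_nbij' Prod.fst (·, j) ?_ (by simp) ?_ (by simp) ?_ <;>
      rintro ⟨a, b⟩ <;> simp only [Finset.mem_filter, Finset.mem_univ, true_and, and_imp] <;>
      rintro h rfl <;> trivial
  have hout : ∑ e ∈ E with e.1 = j, k e * y e.1 = (∑ e ∈ E with e.1 = j, k e) * y j := by
    rw [Finset.sum_mul]
    exact Finset.sum_congr rfl fun e he => by rw [(Finset.mem_filter.1 he).2]
  simp only [mulVec, dotProduct, laplacian, sub_mul, Finset.sum_sub_distrib, hin, hout, ite_mul,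
    zero_mul, Finset.sum_ite_eq, Finset.mem_univ, if_true]

lemma laplacian_mulVec_eq_zero_of_isCirculation {y : Fin m → ℝ}
    (hy : IsCirculation E fun e => k e * y e.1) : laplacian E k *ᵥ y = 0 :=
  funext fun j => by rw [laplacian_mulVec_apply, hy j, sub_self, Pi.zero_apply]

lemma laplacian_mulVec_mul_of_forall_edge {μ : Fin m → ℝ} (hμ : ∀ e ∈ E, μ e.1 = μ e.2)
    (y : Fin m → ℝ) : laplacian E k *ᵥ (y * μ) = (laplacian E k *ᵥ y) * μ := by
  funext j
  simp only [laplacian_mulVec_apply, Pi.mul_apply, sub_mul, Finset.sum_mul]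
  congr 1 <;> refine Finset.sum_congr rfl fun e he => ?_ <;> rw [Finset.mem_filter] at he
  · rw [hμ e he.1, he.2, mul_assoc]
  · rw [he.2, mul_assoc]

/-- Take `k e = w e / y e.1` for a positive circulation `w`: the fluxes `k e * y e.1 = w e`
then balance at every vertex. -/
lemma exists_laplacian_mulVec_eq_zero (hwr : WeaklyReversible E) {y : Fin m → ℝ}
    (hy : ∀ j, 0 < y j) :
    ∃ k : Fin m × Fin m → ℝ, (∀ e ∈ E, 0 < k e) ∧ laplacian E k *ᵥ y = 0 := by
  obtain ⟨w, hw, hpos⟩ := exists_isCirculation_pos hwr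
  refine ⟨fun e => w e / y e.1, fun e he => div_pos (by exact_mod_cast hpos e he) (hy e.1),
    laplacian_mulVec_eq_zero_of_isCirculation ?_⟩
  have hflux : (fun e : Fin m × Fin m => w e / y e.1 * y e.1) = Nat.castAddMonoidHom ℝ ∘ w :=
    funext fun e => div_mul_cancel₀ _ (hy e.1).ne'
  rw [hflux]
  exact hw.map _

end Laplacian

lemma Real.exists_pos_mul_eq_of_sign_eq {a b : ℝ} (h : Real.sign a = Real.sign b) :
    ∃ t, 0 < t ∧ b = t * a := by
  rcases lt_trichotomy a 0 with ha | rfl | ha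
  · have hb : b < 0 := by
      rcases lt_trichotomy b 0 with hb | rfl | hb
      · exact hb
      · simp [Real.sign_of_neg ha] at h
      · rw [Real.sign_of_neg ha, Real.sign_of_pos hb] at h; norm_num at h
    exact ⟨b / a, div_pos_of_neg_of_neg hb ha, (div_mul_cancel₀ b ha.ne).symm⟩
  · rw [Real.sign_zero, eq_comm, Real.sign_eq_zero_iff] at h
    exact ⟨1, one_pos, by simp [h]⟩
  · have hb : 0 < b := by
      rcases lt_trichotomy b 0 with hb | rfl | hb
      · rw [Real.sign_of_pos ha, Real.sign_of_neg hb] at h; norm_num at h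
      · simp [Real.sign_of_pos ha] at h
      · exact hb
    exact ⟨b / a, div_pos hb ha, (div_mul_cancel₀ b ha.ne').symm⟩

lemma transpose_mulVec_apply_eq_of_forall_dotProduct_eq_zero {n m : ℕ}
    {E : Finset (Fin m × Fin m)} {Yt : Matrix (Fin n) (Fin m) ℝ} {u : Fin n → ℝ}
    (hu : ∀ w ∈ stoichSubspace Yt E, u ⬝ᵥ w = 0) {e : Fin m × Fin m} (he : e ∈ E) :
    (Ytᵀ *ᵥ u) e.1 = (Ytᵀ *ᵥ u) e.2 := by
  have h := hu _ (LinearMap.mem_range_self (Yt * incidence E).mulVecLin (Pi.single ⟨e, he⟩ 1))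
  rw [Matrix.mulVecLin_apply, ← Matrix.mulVec_mulVec, Matrix.dotProduct_mulVec,
    ← Matrix.mulVec_transpose, Matrix.mulVec_single_one] at h
  simp only [dotProduct, Matrix.col_apply, incidence, mul_sub, mul_ite, mul_one, mul_zero,
    Finset.sum_sub_distrib, Finset.sum_ite_eq, Finset.mem_univ, if_true] at h
  linarith

lemma not_isStableOn_of_mulVec_eq_zero {n : ℕ} {A : Matrix (Fin n) (Fin n) ℝ}
    {S : Submodule ℝ (Fin n → ℝ)} {v : Fin n → ℝ} (hvS : v ∈ S) (hv : v ≠ 0)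
    (hAv : A *ᵥ v = 0) : ¬ IsStableOn A S := by
  rintro ⟨hA, hstab⟩
  have hker : ∃ w, w ≠ 0 ∧ restrictedMap A S hA w = 0 :=
    ⟨⟨v, hvS⟩, by simpa using hv, Subtype.ext (by simpa [restrictedMap] using hAv)⟩
  have hcoeff := ((LinearMap.hasEigenvalue_zero_tfae (restrictedMap A S hA)).out 5 2).1 hker
  refine (hstab 0 ?_).false
  rw [Polynomial.IsRoot, Polynomial.eval_map_algebraMap, ← Polynomial.coeff_zero_eq_aeval_zero',
    ← Polynomial.constantCoeff_apply, hcoeff, map_zero]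

lemma powVec_pos {n m : ℕ} {x : Fin n → ℝ} (hx : ∀ i, 0 < x i) (Yt : Matrix (Fin n) (Fin m) ℝ)
    (j : Fin m) : 0 < powVec x Yt j :=
  Finset.prod_pos fun i _ => Real.rpow_pos_of_pos (hx i) _

/-- Here `J(x) v = Y A_k (x^Ỹ * Ỹᵀ u)`, and multiplying by the edge-constant `Ỹᵀ u` commutes
with `A_k`. -/
lemma jacobianMat_mulVec_eq_zero {n m : ℕ} {E : Finset (Fin m × Fin m)}
    {k : Fin m × Fin m → ℝ} {Y Yt : Matrix (Fin n) (Fin m) ℝ} {x u v : Fin n → ℝ}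
    (hx : ∀ i, x i ≠ 0) (hvu : ∀ i, v i = x i * u i)
    (heq : laplacian E k *ᵥ powVec x Yt = 0) (hμ : ∀ e ∈ E, (Ytᵀ *ᵥ u) e.1 = (Ytᵀ *ᵥ u) e.2) :
    jacobianMat E k Y Yt x *ᵥ v = 0 := by
  have hv : diagonal (fun i => (x i)⁻¹) *ᵥ v = u :=
    funext fun i => by rw [mulVec_diagonal, hvu, inv_mul_cancel_left₀ (hx i)]
  have hc : diagonal (powVec x Yt) *ᵥ (Ytᵀ *ᵥ u) = powVec x Yt * (Ytᵀ *ᵥ u) :=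
    funext (mulVec_diagonal _ _)
  simp only [jacobianMat, ← mulVec_mulVec, hv, hc, laplacian_mulVec_mul_of_forall_edge hμ, heq,
    zero_mul, mulVec_zero]

theorem stmt10_general {n m : ℕ} (E : Finset (Fin m × Fin m))
    (hwr : WeaklyReversible E) (Y Yt : Matrix (Fin n) (Fin m) ℝ)
    (u v : Fin n → ℝ) (hv : v ≠ 0)
    (huperp : ∀ w ∈ stoichSubspace Yt E, u ⬝ᵥ w = 0)
    (hvS : v ∈ stoichSubspace Y E)
    (hsign : ∀ i, Real.sign (u i) = Real.sign (v i)) :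
    ∃ (k : Fin m × Fin m → ℝ) (x : Fin n → ℝ),
      (∀ e ∈ E, 0 < k e) ∧ (∀ i, 0 < x i) ∧
      (laplacian E k).mulVec (powVec x Yt) = 0 ∧
      (jacobianMat E k Y Yt x).mulVec v = 0 ∧
      ¬ IsStableOn (jacobianMat E k Y Yt x) (stoichSubspace Y E) := by
  choose x hx hvu using fun i => Real.exists_pos_mul_eq_of_sign_eq (hsign i)
  obtain ⟨k, hk, heq⟩ := exists_laplacian_mulVec_eq_zero hwr (powVec_pos hx Yt)
  have hJv : jacobianMat E k Y Yt x *ᵥ v = 0 := jacobianMat_mulVec_eq_zero (fun i => (hx i).ne')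
    hvu heq fun e he => transpose_mulVec_apply_eq_of_forall_dotProduct_eq_zero huperp he
  exact ⟨k, x, hk, hx, heq, hJv, not_isStableOn_of_mulVec_eq_zero hvS hv hJv⟩

/-- if there are nonzero sign-compatible vectors `u ∈ S̃^⊥` and `v ∈ S`, then
there are rate constants and a complex-balanced equilibrium `x*` with `J(x*) v = 0`; in
particular `J(x*)` is not stable on `S`. -/
theorem stmt10 {n m : ℕ} (E : Finset (Fin m × Fin m)) (hE : ∀ e ∈ E, e.1 ≠ e.2)
    (hwr : WeaklyReversible E) (Y Yt : Matrix (Fin n) (Fin m) ℝ)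
    (u v : Fin n → ℝ) (hu : u ≠ 0) (hv : v ≠ 0)
    (huperp : ∀ w ∈ stoichSubspace Yt E, u ⬝ᵥ w = 0)
    (hvS : v ∈ stoichSubspace Y E)
    (hsign : ∀ i, Real.sign (u i) = Real.sign (v i)) :
    ∃ (k : Fin m × Fin m → ℝ) (x : Fin n → ℝ),
      (∀ e ∈ E, 0 < k e) ∧ (∀ i, 0 < x i) ∧
      (laplacian E k).mulVec (powVec x Yt) = 0 ∧
      (jacobianMat E k Y Yt x).mulVec v = 0 ∧
      ¬ IsStableOn (jacobianMat E k Y Yt x) (stoichSubspace Y E) :=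
  stmt10_general E hwr Y Yt u v hv huperp hvS hsign
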